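/- Let V and W be bounded antichain-decomposable persistence modules over ℝ^d. Then d_E(rk_V, rk_W) = sup_{I ∈ Seg} ℰ_{V,W}(I), and moreover ℰ_{V,W}(I) = 0 for every segment I not belonging to Seg_{V,W} ∪ Seg_{W,V}, so that d_E(rk_V, rk_W) = max( sup_{I ∈ Seg_{V,W}} ℰ_{V,W}(I), sup_{I ∈ Seg_{W,V}} ℰ_{V,W}(I) ), with suprema over the empty set equal to 0. -/

import Mathlib

open CategoryTheory CategoryTheory.Limits

noncomputable section

/-- Two elements `p q` of a subset `S` of a poset are order-connected in `S` if there is a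
finite sequence of elements of `S` from `p` to `q` with consecutive terms comparable. -/
def OrderConnIn {P : Type} [PartialOrder P] (S : Set P) (p q : P) : Prop :=
  p ∈ S ∧ Relation.ReflTransGen (fun a b => b ∈ S ∧ (a ≤ b ∨ b ≤ a)) p q

/-- A subset `S` of a poset is convex if `p ≤ r ≤ q` with `p, q ∈ S` implies `r ∈ S`. -/
def IsConvexSubset {P : Type} [PartialOrder P] (S : Set P) : Prop :=
  ∀ ⦃p r q : P⦄, p ∈ S → q ∈ S → p ≤ r → r ≤ q → r ∈ S

/-- An interval of a poset: a convex subset any two of whose elements are order-connected. -/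
def IsPosetInterval {P : Type} [PartialOrder P] (S : Set P) : Prop :=
  IsConvexSubset S ∧ ∀ p ∈ S, ∀ q ∈ S, OrderConnIn S p q

open Classical in
/-- The submodule of `F` which is everything at points of `I` and zero elsewhere. -/
def indSub (F : Type) [Field F] {P : Type} (I : Set P) (p : P) : Submodule F F :=
  if p ∈ I then ⊤ else ⊥

open Classical in
/-- The canonical map between submodules of `F`: the inclusion when it exists, zero otherwise. -/
def indMap (F : Type) [Field F] (S T : Submodule F F) : S →ₗ[F] T :=
  if h : S ≤ T then Submodule.inclusion h else 0

theorem indSub_subsingleton {F : Type} [Field F] {P : Type} {I : Set P} {p : P}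
    (hp : p ∉ I) : Subsingleton (indSub F I p) := by
  rw [indSub, if_neg hp]
  infer_instance

theorem indMap_comp (F : Type) [Field F] {P : Type} [PartialOrder P] {I : Set P}
    (hI : IsConvexSubset I) {p q r : P} (hpq : p ≤ q) (hqr : q ≤ r) :
    (indMap F (indSub F I q) (indSub F I r)).comp (indMap F (indSub F I p) (indSub F I q))
      = indMap F (indSub F I p) (indSub F I r) := by
  by_cases hp : p ∈ I
  · by_cases hr : r ∈ I
    · have hq : q ∈ I := hI hp hr hpq hqr
      have h1 : indSub F I p ≤ indSub F I q := by simp [indSub, hp, hq]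
      have h2 : indSub F I q ≤ indSub F I r := by simp [indSub, hq, hr]
      have h3 : indSub F I p ≤ indSub F I r := h1.trans h2
      simp only [indMap, dif_pos h1, dif_pos h2, dif_pos h3]
      ext x
      rfl
    · haveI := indSub_subsingleton (F := F) (I := I) hr
      exact LinearMap.ext fun x => Subsingleton.elim _ _
  · haveI := indSub_subsingleton (F := F) (I := I) hp
    apply LinearMap.ext
    intro x
    rw [Subsingleton.elim x 0]
    simp

/-- The indicator persistence module of a convex subset `I` of a poset `P`: it assigns `F` to
points of `I` and `0` to other points, with identity structure maps between points of `I` and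
zero maps otherwise. -/
def indicatorModule (F : Type) [Field F] {P : Type} [PartialOrder P] (I : Set P)
    (hI : IsConvexSubset I) : P ⥤ ModuleCat.{0} F where
  obj p := ModuleCat.of F (indSub F I p)
  map {p q} f := ModuleCat.ofHom (indMap F (indSub F I p) (indSub F I q))
  map_id p := by
    ext x
    simp only [indMap, dif_pos le_rfl]
    rfl
  map_comp {p q r} f g := by
    rw [← ModuleCat.ofHom_comp, indMap_comp F hI f.le g.le]

/-- The support of a persistence module: the points where it is nonzero. -/
def suppMod (F : Type) [Field F] {P : Type} [PartialOrder P] (V : P ⥤ ModuleCat.{0} F) :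
    Set P := {p | Nontrivial (V.obj p)}

/-- The rank of the structure map of `V` associated to `p ≤ q`. -/
def rankMap (F : Type) [Field F] {P : Type} [PartialOrder P] (V : P ⥤ ModuleCat.{0} F)
    {p q : P} (h : p ≤ q) : ℕ :=
  Module.finrank F (LinearMap.range (V.map (homOfLE h)).hom)

/-- A persistence module is antichain-decomposable if it is isomorphic to a direct sum of
indicator modules of intervals whose elements are pairwise incomparable across distinct
summands. -/
def IsACD (F : Type) [Field F] {P : Type} [PartialOrder P] (V : P ⥤ ModuleCat.{0} F) : Prop :=
  ∃ (A : Type) (S : A → Set P) (hS : ∀ α, IsPosetInterval (S α)),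
    (∀ ⦃α β : A⦄, α ≠ β → ∀ p ∈ S α, ∀ q ∈ S β, ¬ p ≤ q ∧ ¬ q ≤ p) ∧
    Nonempty (V ≅ ∐ fun α => indicatorModule F (S α) (hS α).1)

/-- A persistence module is thin if it is pointwise of dimension `0` or `1`. -/
def IsThin (F : Type) [Field F] {P : Type} [PartialOrder P] (V : P ⥤ ModuleCat.{0} F) : Prop :=
  ∀ p : P, Module.rank F (V.obj p) = 0 ∨ Module.rank F (V.obj p) = 1

/-- We regard `ℝ^d` (with the product order) as a poset category. -/
instance (d : ℕ) : CategoryTheory.Category (Fin d → ℝ) := Preorder.smallCategory _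

open Classical in
/-- The rank invariant of `V` on the segment `[p, q]` (junk value `0` when `¬ p ≤ q`). -/
def rkInv (F : Type) [Field F] {d : ℕ} (V : (Fin d → ℝ) ⥤ ModuleCat.{0} F)
    (p q : Fin d → ℝ) : ℕ :=
  if h : p ≤ q then Module.finrank F (LinearMap.range (V.map (homOfLE h)).hom) else 0

/-- The rank invariant of `V` on the `ε`-thickening `[p - ε𝟙, q + ε𝟙]` of the segment `[p, q]`. -/
def rkShift (F : Type) [Field F] {d : ℕ} (V : (Fin d → ℝ) ⥤ ModuleCat.{0} F) (ε : ℝ)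
    (p q : Fin d → ℝ) : ℕ :=
  rkInv F V (fun i => p i - ε) (fun i => q i + ε)

/-- `ε` is a feasible erosion for the pair `(rk_V, rk_W)`: for every segment `[p, q]`,
`rk_V([p, q]^{+ε}) ≤ rk_W([p, q])` and `rk_W([p, q]^{+ε}) ≤ rk_V([p, q])`. -/
def Feasible (F : Type) [Field F] {d : ℕ} (V W : (Fin d → ℝ) ⥤ ModuleCat.{0} F) (ε : ℝ) :
    Prop :=
  ∀ p q : Fin d → ℝ, p ≤ q →
    rkShift F V ε p q ≤ rkInv F W p q ∧ rkShift F W ε p q ≤ rkInv F V p q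

/-- The erosion distance between the rank invariants of `V` and `W`. -/
def erosionDist (F : Type) [Field F] {d : ℕ} (V W : (Fin d → ℝ) ⥤ ModuleCat.{0} F) : ℝ :=
  sInf {ε : ℝ | 0 < ε ∧ Feasible F V W ε}

/-- `ℰ_{V,W}(I)` for the segment `I = [p, q]`. -/
def erosionPair (F : Type) [Field F] {d : ℕ} (V W : (Fin d → ℝ) ⥤ ModuleCat.{0} F)
    (p q : Fin d → ℝ) : ℝ :=
  sInf {ε : ℝ | 0 < ε ∧ rkShift F V ε p q ≤ rkInv F W p q ∧ rkShift F W ε p q ≤ rkInv F V p q}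

/-- `ℰ_V(I)` for the segment `I = [p, q]`. -/
def erosionOne (F : Type) [Field F] {d : ℕ} (V : (Fin d → ℝ) ⥤ ModuleCat.{0} F)
    (p q : Fin d → ℝ) : ℝ :=
  sInf {ε : ℝ | 0 < ε ∧ rkShift F V ε p q = 0}

/-- The segment `[p, q]` belongs to `Seg_{V,W}`, i.e. `rk_V([p, q]) = 1` and
`rk_W([p, q]) = 0`. -/
def SegMem (F : Type) [Field F] {d : ℕ} (V W : (Fin d → ℝ) ⥤ ModuleCat.{0} F)
    (p q : Fin d → ℝ) : Prop :=
  p ≤ q ∧ rkInv F V p q = 1 ∧ rkInv F W p q = 0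

/-- `V(u) ≅ F`. -/
def ptIsLine (F : Type) [Field F] {d : ℕ} (V : (Fin d → ℝ) ⥤ ModuleCat.{0} F)
    (u : Fin d → ℝ) : Prop :=
  Nonempty ((V.obj u) ≃ₗ[F] F)

/-- `ℝ^d_{V,W} = {u ∈ ℝ^d : V(u) ≅ F and W(u) = 0}`. -/
def RVW (F : Type) [Field F] {d : ℕ} (V W : (Fin d → ℝ) ⥤ ModuleCat.{0} F) :
    Set (Fin d → ℝ) :=
  {u | ptIsLine F V u ∧ Subsingleton (W.obj u)}

/-- `ℝ^d_V = {u ∈ ℝ^d : V(u) ≅ F}`. -/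
def RV (F : Type) [Field F] {d : ℕ} (V : (Fin d → ℝ) ⥤ ModuleCat.{0} F) :
    Set (Fin d → ℝ) :=
  {u | ptIsLine F V u}

/-- `ℰ^small_V(p) = sup_{q ≥ p} ℰ_V([p, q])`. -/
def erosionSmall (F : Type) [Field F] {d : ℕ} (V : (Fin d → ℝ) ⥤ ModuleCat.{0} F)
    (p : Fin d → ℝ) : ℝ :=
  sSup {x : ℝ | ∃ q : Fin d → ℝ, p ≤ q ∧ x = erosionOne F V p q}

/-- `ℰ^large_V(q) = sup_{p ≤ q} ℰ_V([p, q])`. -/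
def erosionLarge (F : Type) [Field F] {d : ℕ} (V : (Fin d → ℝ) ⥤ ModuleCat.{0} F)
    (q : Fin d → ℝ) : ℝ :=
  sSup {x : ℝ | ∃ p : Fin d → ℝ, p ≤ q ∧ x = erosionOne F V p q}

/-- `ℰ*(V, W) = max( sup_{p ∈ ℝ^d_{V,W}} ℰ^small_V(p), sup_{q ∈ ℝ^d_{V,W}} ℰ^large_V(q) )`. -/
def erosionStar (F : Type) [Field F] {d : ℕ} (V W : (Fin d → ℝ) ⥤ ModuleCat.{0} F) : ℝ :=
  max (sSup {x : ℝ | ∃ p ∈ RVW F V W, x = erosionSmall F V p})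
      (sSup {x : ℝ | ∃ q ∈ RVW F V W, x = erosionLarge F V q})

/-- A bounded antichain-decomposable module over `ℝ^d`: an ACD module whose support is a
bounded subset of `ℝ^d`. -/
def IsBoundedACD (F : Type) [Field F] {d : ℕ} (V : (Fin d → ℝ) ⥤ ModuleCat.{0} F) : Prop :=
  IsACD F V ∧ Bornology.IsBounded (suppMod F V)



/-! ACD modules are thin, so every rank is `0` or `1` and thickening a segment can only lower it.
Hence, for each segment, the set of `ε` admissible in `ℰ_{V,W}` is upward closed, and bounded
supports give one `ε` admissible for every segment (a segment thickened beyond the diameter of the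
support leaves it). Under these two conditions the infimum of the `ε` admissible for all segments
is the supremum over segments of the individual infima. Outside `Seg_{V,W} ∪ Seg_{W,V}` the two
ranks agree, so every `ε > 0` is admissible and `ℰ_{V,W}` vanishes. -/

theorem sInf_setOf_pos_and (P : Prop) : sInf {ε : ℝ | 0 < ε ∧ P} = 0 := by
  by_cases hP : P
  · simp only [hP, and_true]
    exact csInf_Ioi
  · simp [hP]

section InfSup

variable {α β : Type*} {P : α → β → Prop} {Q : α → β → ℝ → Prop}

theorem bddAbove_setOf_sInf_pos {R : ℝ} (hR0 : 0 < R) (hR : ∀ a b, P a b → Q a b R) :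
    BddAbove {x | ∃ a b, P a b ∧ x = sInf {ε | 0 < ε ∧ Q a b ε}} := by
  refine ⟨R, ?_⟩
  rintro _ ⟨a, b, hab, rfl⟩
  exact csInf_le ⟨0, fun _ h => h.1.le⟩ ⟨hR0, hR a b hab⟩

theorem sInf_setOf_forall_eq_sSup_sInf
    (hQ : ∀ a b, P a b → ∀ ⦃ε ε'⦄, 0 < ε → ε ≤ ε' → Q a b ε → Q a b ε')
    {R : ℝ} (hR0 : 0 < R) (hR : ∀ a b, P a b → Q a b R) :
    sInf {ε | 0 < ε ∧ ∀ a b, P a b → Q a b ε} =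
      sSup {x | ∃ a b, P a b ∧ x = sInf {ε | 0 < ε ∧ Q a b ε}} := by
  have hbdd : ∀ a b, BddBelow {ε | 0 < ε ∧ Q a b ε} := fun _ _ => ⟨0, fun _ h => h.1.le⟩
  have hsup_nonneg : 0 ≤ sSup {x | ∃ a b, P a b ∧ x = sInf {ε | 0 < ε ∧ Q a b ε}} := by
    refine Real.sSup_nonneg ?_
    rintro _ ⟨a, b, -, rfl⟩
    exact Real.sInf_nonneg fun _ h => h.1.le
  apply le_antisymm
  · refine le_of_forall_pos_le_add fun δ hδ => csInf_le ⟨0, fun _ h => h.1.le⟩ ⟨by linarith, ?_⟩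
    intro a b hab
    have hlt : sInf {ε | 0 < ε ∧ Q a b ε} <
        sSup {x | ∃ a b, P a b ∧ x = sInf {ε | 0 < ε ∧ Q a b ε}} + δ :=
      (le_csSup (bddAbove_setOf_sInf_pos hR0 hR) ⟨a, b, hab, rfl⟩).trans_lt
        (lt_add_of_pos_right _ hδ)
    have hne : {ε | 0 < ε ∧ Q a b ε}.Nonempty := ⟨R, hR0, hR a b hab⟩
    obtain ⟨ε, hε, hεlt⟩ := exists_lt_of_csInf_lt hne hlt
    exact hQ a b hab hε.1 hεlt.le hε.2
  · have hne : {ε | 0 < ε ∧ ∀ a b, P a b → Q a b ε}.Nonempty := ⟨R, hR0, hR⟩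
    refine Real.sSup_le ?_ (Real.sInf_nonneg fun _ h => h.1.le)
    rintro _ ⟨a, b, hab, rfl⟩
    exact csInf_le_csInf (hbdd a b) hne fun ε hε => ⟨hε.1, hε.2 a b hab⟩

end InfSup

theorem sSup_setOf_eq_max_of_eq_zero {α β : Type*} {P A B : α → β → Prop} {f : α → β → ℝ}
    (hA : ∀ a b, A a b → P a b) (hB : ∀ a b, B a b → P a b) (hf : ∀ a b, 0 ≤ f a b)
    (hzero : ∀ a b, P a b → ¬ A a b → ¬ B a b → f a b = 0)
    (hbdd : BddAbove {x | ∃ a b, P a b ∧ x = f a b}) :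
    sSup {x | ∃ a b, P a b ∧ x = f a b} =
      max (sSup {x | ∃ a b, A a b ∧ x = f a b}) (sSup {x | ∃ a b, B a b ∧ x = f a b}) := by
  have hsub : ∀ C : α → β → Prop, (∀ a b, C a b → P a b) →
      {x | ∃ a b, C a b ∧ x = f a b} ⊆ {x | ∃ a b, P a b ∧ x = f a b} := by
    rintro C hC _ ⟨a, b, h, rfl⟩
    exact ⟨a, b, hC a b h, rfl⟩
  have hnonneg : ∀ C : α → β → Prop, 0 ≤ sSup {x | ∃ a b, C a b ∧ x = f a b} := by
    intro C
    refine Real.sSup_nonneg ?_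
    rintro _ ⟨a, b, -, rfl⟩
    exact hf a b
  apply le_antisymm
  · refine Real.sSup_le ?_ (le_max_of_le_left (hnonneg A))
    rintro _ ⟨a, b, hab, rfl⟩
    by_cases ha : A a b
    · exact le_max_of_le_left (le_csSup (hbdd.mono (hsub A hA)) ⟨a, b, ha, rfl⟩)
    by_cases hb : B a b
    · exact le_max_of_le_right (le_csSup (hbdd.mono (hsub B hB)) ⟨a, b, hb, rfl⟩)
    rw [hzero a b hab ha hb]
    exact le_max_of_le_left (hnonneg A)
  · refine max_le (Real.sSup_le ?_ (hnonneg P)) (Real.sSup_le ?_ (hnonneg P)) <;>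
    rintro _ ⟨a, b, h, rfl⟩
    · exact le_csSup hbdd ⟨a, b, hA a b h, rfl⟩
    · exact le_csSup hbdd ⟨a, b, hB a b h, rfl⟩

theorem LinearMap.finrank_range_comp_comp_le {K M₁ M₂ M₃ M₄ : Type*} [DivisionRing K]
    [AddCommGroup M₁] [Module K M₁] [AddCommGroup M₂] [Module K M₂] [AddCommGroup M₃]
    [Module K M₃] [AddCommGroup M₄] [Module K M₄] [FiniteDimensional K M₃]
    (f : M₁ →ₗ[K] M₂) (g : M₂ →ₗ[K] M₃) (h : M₃ →ₗ[K] M₄) :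
    Module.finrank K (range (h ∘ₗ g ∘ₗ f)) ≤ Module.finrank K (range g) :=
  calc Module.finrank K (range (h ∘ₗ g ∘ₗ f))
      ≤ Module.finrank K (range (g ∘ₗ f)) := by
        rw [range_comp (g ∘ₗ f) h]
        exact Submodule.finrank_map_le _ _
    _ ≤ Module.finrank K (range g) := Submodule.finrank_mono (range_comp_le_range f g)

section Thin

variable {F : Type} [Field F] {P : Type} [PartialOrder P] {V : P ⥤ ModuleCat.{0} F}

theorem IsACD.isThin (hV : IsACD F V) : IsThin F V := by
  classical
  intro p
  obtain ⟨A, S, hS, hinc, ⟨e⟩⟩ := hV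
  let G : A → (P ⥤ ModuleCat.{0} F) := fun α => indicatorModule F (S α) (hS α).1
  let eval : V.obj p ≃ₗ[F] DirectSum A fun α => indSub F (S α) p :=
    (e.app p).toLinearEquiv ≪≫ₗ
      (PreservesCoproduct.iso ((evaluation P (ModuleCat.{0} F)).obj p) G).toLinearEquiv ≪≫ₗ
      (ModuleCat.coprodIsoDirectSum fun α => (G α).obj p).toLinearEquiv
  rw [eval.rank_eq]
  by_cases hp : ∃ α, p ∈ S α
  · obtain ⟨α, hα⟩ := hp
    have hother : ∀ β ≠ α, Subsingleton (indSub F (S β) p) := fun β hβ =>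
      indSub_subsingleton fun hβp => (hinc hβ p hβp p hα).1 le_rfl
    let π := DirectSum.component F A (fun β => indSub F (S β) p) α
    have hπ : Function.Bijective π := by
      refine ⟨fun x y hxy => DFinsupp.ext fun β => ?_, fun x => ⟨DirectSum.lof F A _ α x, ?_⟩⟩
      · by_cases hβ : β = α
        · subst hβ
          exact hxy
        · exact (hother β hβ).elim _ _
      · exact DirectSum.component.lof_self F (M := fun β => indSub F (S β) p) α x
    right
    rw [(LinearEquiv.ofBijective π hπ).rank_eq, indSub, if_pos hα, rank_top, Module.rank_self]
  · push Not at hp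
    have := fun α => indSub_subsingleton (F := F) (hp α)
    exact Or.inl (rank_subsingleton' F _)

theorem IsThin.finite (hV : IsThin F V) (p : P) : Module.Finite F (V.obj p) :=
  Module.rank_lt_aleph0_iff.mp (by rcases hV p with h | h <;> simp [h, Cardinal.aleph0_pos])

theorem IsThin.finrank_le_one (hV : IsThin F V) (p : P) : Module.finrank F (V.obj p) ≤ 1 := by
  rcases hV p with h | h
  · rw [Module.finrank_eq_of_rank_eq (n := 0) (by simpa using h)]
    exact zero_le_one
  · rw [Module.finrank_eq_of_rank_eq (n := 1) (by simpa using h)]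

end Thin

section RankInvariant

variable {F : Type} [Field F] {d : ℕ} {V : (Fin d → ℝ) ⥤ ModuleCat.{0} F}

theorem rkInv_le_of_le_of_le {p' p q q' : Fin d → ℝ} [Module.Finite F (V.obj q)] (hp : p' ≤ p)
    (hpq : p ≤ q) (hq : q ≤ q') : rkInv F V p' q' ≤ rkInv F V p q := by
  have hp'q' : p' ≤ q' := hp.trans (hpq.trans hq)
  have hfactor : V.map (homOfLE hp'q') =
      V.map (homOfLE hp) ≫ V.map (homOfLE hpq) ≫ V.map (homOfLE hq) := by
    rw [← V.map_comp, ← V.map_comp]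
    rfl
  rw [rkInv, dif_pos hp'q', rkInv, dif_pos hpq, hfactor]
  exact LinearMap.finrank_range_comp_comp_le _ _ _

theorem rkShift_le_rkInv (hV : IsThin F V) {ε : ℝ} (hε : 0 ≤ ε) {p q : Fin d → ℝ} (hpq : p ≤ q) :
    rkShift F V ε p q ≤ rkInv F V p q := by
  have := hV.finite q
  exact rkInv_le_of_le_of_le (fun i => by simp [hε]) hpq (fun i => by simp [hε])

theorem rkShift_le_of_le (hV : IsThin F V) {ε ε' : ℝ} (hε : 0 ≤ ε) (hεε' : ε ≤ ε')
    {p q : Fin d → ℝ} (hpq : p ≤ q) : rkShift F V ε' p q ≤ rkShift F V ε p q := by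
  have := hV.finite (fun i => q i + ε)
  exact rkInv_le_of_le_of_le (fun i => by simp; linarith) (fun i => by linarith [hpq i])
    (fun i => by simp; linarith)

theorem IsThin.rkInv_le_one (hV : IsThin F V) (p q : Fin d → ℝ) : rkInv F V p q ≤ 1 := by
  rw [rkInv]
  split_ifs
  · have := hV.finite q
    exact (Submodule.finrank_le _).trans (hV.finrank_le_one q)
  · exact zero_le_one

theorem rkInv_eq_zero_of_notMem {p q : Fin d → ℝ}
    (h : ¬ (p ∈ suppMod F V ∧ q ∈ suppMod F V)) : rkInv F V p q = 0 := by
  rw [rkInv]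
  split_ifs with hpq
  · simp only [suppMod, Set.mem_ofPred_eq, not_nontrivial_iff_subsingleton, not_and_or] at h
    rcases h with h | h
    · rw [LinearMap.range_eq_bot.mpr (Subsingleton.elim _ 0), finrank_bot]
    · exact Module.finrank_zero_of_subsingleton
  · rfl

theorem rkShift_eq_zero_of_diam_lt [Nonempty (Fin d)] (hV : Bornology.IsBounded (suppMod F V))
    {ε : ℝ} (hε : Metric.diam (suppMod F V) < ε) {p q : Fin d → ℝ} (hpq : p ≤ q) :
    rkShift F V ε p q = 0 := by
  refine rkInv_eq_zero_of_notMem fun ⟨hp, hq⟩ => ?_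
  obtain ⟨i⟩ := ‹Nonempty (Fin d)›
  have hdist := (dist_le_pi_dist _ _ i).trans (Metric.dist_le_diam_of_mem hV hp hq)
  rw [Real.dist_eq] at hdist
  linarith [neg_le_abs (p i - ε - (q i + ε)), hpq i, Metric.diam_nonneg (s := suppMod F V)]

theorem rkShift_of_isEmpty [IsEmpty (Fin d)] (ε : ℝ) (p q : Fin d → ℝ) :
    rkShift F V ε p q = rkInv F V p q := by
  rw [rkShift, Subsingleton.elim (fun i => p i - ε) p, Subsingleton.elim (fun i => q i + ε) q]

end RankInvariant

section Erosion

variable {F : Type} [Field F] {d : ℕ} {V W : (Fin d → ℝ) ⥤ ModuleCat.{0} F}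

theorem erosionPair_nonneg (p q : Fin d → ℝ) : 0 ≤ erosionPair F V W p q :=
  Real.sInf_nonneg fun _ h => h.1.le

theorem erosionPair_eq_zero_of_not_segMem (hV : IsThin F V) (hW : IsThin F W)
    (p q : Fin d → ℝ) (hpq : p ≤ q) (hVW : ¬ SegMem F V W p q) (hWV : ¬ SegMem F W V p q) :
    erosionPair F V W p q = 0 := by
  have hrk : rkInv F V p q = rkInv F W p q := by
    have := hV.rkInv_le_one p q
    have := hW.rkInv_le_one p q
    simp only [SegMem, hpq, true_and] at hVW hWV
    omega
  have hall : {ε | 0 < ε ∧ rkShift F V ε p q ≤ rkInv F W p q ∧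
      rkShift F W ε p q ≤ rkInv F V p q} = Set.Ioi 0 :=
    Set.ext fun ε => ⟨And.left, fun hε => ⟨hε, hrk ▸ rkShift_le_rkInv hV hε.le hpq,
      hrk ▸ rkShift_le_rkInv hW hε.le hpq⟩⟩
  rw [erosionPair, hall, csInf_Ioi]

theorem erosionDist_eq_sSup_erosionPair_of_nonempty [Nonempty (Fin d)] (hV : IsThin F V)
    (hW : IsThin F W) (hVb : Bornology.IsBounded (suppMod F V))
    (hWb : Bornology.IsBounded (suppMod F W)) :
    erosionDist F V W = sSup {x | ∃ p q : Fin d → ℝ, p ≤ q ∧ x = erosionPair F V W p q} ∧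
      BddAbove {x | ∃ p q : Fin d → ℝ, p ≤ q ∧ x = erosionPair F V W p q} := by
  set R := max (Metric.diam (suppMod F V)) (Metric.diam (suppMod F W)) + 1
  have hR0 : 0 < R := by positivity
  have hVR : Metric.diam (suppMod F V) < R := (le_max_left _ _).trans_lt (lt_add_one _)
  have hWR : Metric.diam (suppMod F W) < R := (le_max_right _ _).trans_lt (lt_add_one _)
  have hR : ∀ p q : Fin d → ℝ, p ≤ q →
      rkShift F V R p q ≤ rkInv F W p q ∧ rkShift F W R p q ≤ rkInv F V p q := fun p q hpq =>
    ⟨by rw [rkShift_eq_zero_of_diam_lt hVb hVR hpq]; exact Nat.zero_le _,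
      by rw [rkShift_eq_zero_of_diam_lt hWb hWR hpq]; exact Nat.zero_le _⟩
  have hmono : ∀ p q : Fin d → ℝ, p ≤ q → ∀ ⦃ε ε'⦄, 0 < ε → ε ≤ ε' →
      rkShift F V ε p q ≤ rkInv F W p q ∧ rkShift F W ε p q ≤ rkInv F V p q →
      rkShift F V ε' p q ≤ rkInv F W p q ∧ rkShift F W ε' p q ≤ rkInv F V p q :=
    fun p q hpq _ _ hε hεε' h =>
      ⟨(rkShift_le_of_le hV hε.le hεε' hpq).trans h.1,
        (rkShift_le_of_le hW hε.le hεε' hpq).trans h.2⟩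
  exact ⟨sInf_setOf_forall_eq_sSup_sInf hmono hR0 hR, bddAbove_setOf_sInf_pos hR0 hR⟩

theorem erosionDist_eq_sSup_erosionPair (hV : IsThin F V) (hW : IsThin F W)
    (hVb : Bornology.IsBounded (suppMod F V)) (hWb : Bornology.IsBounded (suppMod F W)) :
    erosionDist F V W = sSup {x | ∃ p q : Fin d → ℝ, p ≤ q ∧ x = erosionPair F V W p q} ∧
      BddAbove {x | ∃ p q : Fin d → ℝ, p ≤ q ∧ x = erosionPair F V W p q} := by
  -- On `ℝ^0` thickening does nothing and there may be no admissible `ε` at all, but then every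
  -- infimum involved is `0`, possibly as the junk value `sInf ∅`.
  rcases isEmpty_or_nonempty (Fin d) with hd | hd
  · have hdist : erosionDist F V W = 0 := by
      simp only [erosionDist, Feasible, rkShift_of_isEmpty]
      exact sInf_setOf_pos_and _
    have hpair : ∀ p q, erosionPair F V W p q = 0 := fun p q => by
      simp only [erosionPair, rkShift_of_isEmpty]
      exact sInf_setOf_pos_and _
    have hT : {x | ∃ p q : Fin d → ℝ, p ≤ q ∧ x = erosionPair F V W p q} = {0} := by
      simp [hpair]
    rw [hT, hdist, csSup_singleton]
    exact ⟨rfl, bddAbove_singleton⟩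
  · exact erosionDist_eq_sSup_erosionPair_of_nonempty hV hW hVb hWb

end Erosion

/-- for bounded ACD modules over `ℝ^d`, the erosion distance is the supremum of
`ℰ_{V,W}` over all segments; `ℰ_{V,W}` vanishes on segments outside `Seg_{V,W} ∪ Seg_{W,V}`;
hence the erosion distance is the maximum of the suprema of `ℰ_{V,W}` over `Seg_{V,W}` and
over `Seg_{W,V}`. -/
theorem erosion_dist_sup_characterization (F : Type) [Field F] {d : ℕ}
    (V W : (Fin d → ℝ) ⥤ ModuleCat.{0} F)
    (hV : IsBoundedACD F V) (hW : IsBoundedACD F W) :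
    erosionDist F V W =
      sSup {x : ℝ | ∃ p q : Fin d → ℝ, p ≤ q ∧ x = erosionPair F V W p q} ∧
    (∀ p q : Fin d → ℝ, p ≤ q → ¬ SegMem F V W p q → ¬ SegMem F W V p q →
      erosionPair F V W p q = 0) ∧
    erosionDist F V W =
      max (sSup {x : ℝ | ∃ p q : Fin d → ℝ, SegMem F V W p q ∧ x = erosionPair F V W p q})
          (sSup {x : ℝ | ∃ p q : Fin d → ℝ, SegMem F W V p q ∧ x = erosionPair F V W p q}) := by
  obtain ⟨hVacd, hVb⟩ := hV
  obtain ⟨hWacd, hWb⟩ := hW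
  have hzero := erosionPair_eq_zero_of_not_segMem hVacd.isThin hWacd.isThin
  obtain ⟨hdist, hbdd⟩ := erosionDist_eq_sSup_erosionPair hVacd.isThin hWacd.isThin hVb hWb
  exact ⟨hdist, hzero, hdist.trans <| sSup_setOf_eq_max_of_eq_zero (fun _ _ h => h.1)
    (fun _ _ h => h.1) erosionPair_nonneg hzero hbdd⟩
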